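/- arXiv:1701.09055 — 3 statements merged into one kernel-verified Lean document; each statement's English description precedes it below -/
import Mathlib

section
/- Let U be a uniform random variable on [0,1] and for probability measures μ, ν on ℝ with finite second moments let F_μ^{-1}, F_ν^{-1} denote their quantile functions. Then E[(F_μ^{-1}(U) - F_ν^{-1}(U))²] equals the squared quadratic Wasserstein distance W₂²(μ,ν), i.e. the coupling (F_μ^{-1}(U), F_ν^{-1}(U)) is optimal for the quadratic cost. -/
open MeasureTheory ProbabilityTheory Real BigOperators

noncomputable def Wsq (μ ν : MeasureTheory.Measure ℝ) : ℝ :=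
  sInf { c : ℝ | ∃ m : MeasureTheory.Measure (ℝ × ℝ),
    m.map Prod.fst = μ ∧ m.map Prod.snd = ν ∧ c = ∫ p, (p.1 - p.2) ^ 2 ∂m }

/-- Quadratic Wasserstein distance. -/
noncomputable def W2 (μ ν : MeasureTheory.Measure ℝ) : ℝ := Real.sqrt (Wsq μ ν)

/-- Finite second moment. -/
def FiniteSecondMoment (μ : MeasureTheory.Measure ℝ) : Prop :=
  MeasureTheory.Integrable (fun x => x ^ 2) μ

/-- Quantile function of a measure on ℝ. -/
noncomputable def quantile (μ : MeasureTheory.Measure ℝ) (t : ℝ) : ℝ :=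
  sInf { x : ℝ | t ≤ ProbabilityTheory.cdf μ x }

open Set Filter Topology

/-!
The quantile map pushes the uniform law on `(0, 1)` forward to `μ`, so `u ↦ (F_μ⁻¹ u, F_ν⁻¹ u)`
is a coupling of `μ` and `ν`; it gives every lower quadrant `Iic s ×ˢ Iic t` the mass
`min (F_μ s) (F_ν t)`, the largest mass any coupling can give it. The cost `∫ (x - y)²` of a
coupling is the sum of the marginal second moments minus `2 ∫ x y`, so it remains to see that
`∫ x y` increases with the quadrant masses. This is Hoeffding's identity
`x y = ∬ layer s x * layer t y ds dt` with `layer s x = 𝟙[0 ≤ s] - 𝟙[x ≤ s]`: after Fubini, the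
inner integral against a coupling depends on it only through the mass of `Iic s ×ˢ Iic t`.
-/

section Quantile

variable {μ : Measure ℝ} {u : ℝ}

lemma bddBelow_setOf_le_cdf (hu : 0 < u) : BddBelow {x | u ≤ cdf μ x} := by
  obtain ⟨x₀, hx₀⟩ := eventually_atBot.1 ((tendsto_cdf_atBot μ).eventually_lt_const hu)
  exact ⟨x₀, fun y hy => not_lt.1 fun hlt => (hx₀ y hlt.le).not_ge hy⟩

lemma nonempty_setOf_le_cdf (hu : u < 1) : {x | u ≤ cdf μ x}.Nonempty :=
  ((tendsto_cdf_atTop μ).eventually_const_le hu).exists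

lemma le_cdf_quantile (h0 : 0 < u) (h1 : u < 1) : u ≤ cdf μ (quantile μ u) := by
  set S := {x | u ≤ cdf μ x}
  have hbdd : BddBelow S := bddBelow_setOf_le_cdf h0
  have : (𝓝[S] sInf S).NeBot :=
    mem_closure_iff_nhdsWithin_neBot.1 (csInf_mem_closure (nonempty_setOf_le_cdf h1) hbdd)
  have hcont : ContinuousWithinAt (cdf μ) S (sInf S) :=
    ((cdf μ).right_continuous _).mono fun y hy => csInf_le hbdd hy
  exact ge_of_tendsto hcont (eventually_nhdsWithin_of_forall fun y hy => hy)

lemma quantile_le_iff (h0 : 0 < u) (h1 : u < 1) {x : ℝ} : quantile μ u ≤ x ↔ u ≤ cdf μ x :=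
  ⟨fun h => (le_cdf_quantile h0 h1).trans (monotone_cdf μ h),
    fun h => csInf_le (bddBelow_setOf_le_cdf h0) h⟩

lemma monotoneOn_quantile : MonotoneOn (quantile μ) (Ioo 0 1) := fun _ ha _ hb hab =>
  le_csInf (nonempty_setOf_le_cdf hb.2) fun _ hx =>
    csInf_le (bddBelow_setOf_le_cdf ha.1) (hab.trans hx)

lemma aemeasurable_quantile : AEMeasurable (quantile μ) (volume.restrict (Ioo 0 1)) :=
  aemeasurable_restrict_of_monotoneOn measurableSet_Ioo monotoneOn_quantile

lemma preimage_quantile_Iic_ae_eq (x : ℝ) :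
    quantile μ ⁻¹' Iic x =ᵐ[volume.restrict (Ioo 0 1)] Iic (cdf μ x) := by
  rw [eventuallyEq_set]
  filter_upwards [ae_restrict_mem measurableSet_Ioo] with u hu using quantile_le_iff hu.1 hu.2

end Quantile

lemma volume_restrict_Ioo_zero_one_Iic {c : ℝ} (hc : c ≤ 1) :
    volume.restrict (Ioo 0 1) (Iic c) = ENNReal.ofReal c := by
  rw [Measure.restrict_congr_set Ioo_ae_eq_Ioc, Measure.restrict_apply measurableSet_Iic,
    inter_comm, Ioc_inter_Iic, min_eq_right hc, Real.volume_Ioc, sub_zero]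

lemma map_quantile (μ : Measure ℝ) [IsProbabilityMeasure μ] :
    (volume.restrict (Ioo 0 1)).map (quantile μ) = μ := by
  refine Measure.ext_of_Iic _ _ fun x => ?_
  rw [Measure.map_apply_of_aemeasurable aemeasurable_quantile measurableSet_Iic,
    measure_congr (preimage_quantile_Iic_ae_eq x),
    volume_restrict_Ioo_zero_one_Iic (cdf_le_one μ x), ofReal_cdf]

noncomputable def quantileCoupling (μ ν : Measure ℝ) : Measure (ℝ × ℝ) :=
  (volume.restrict (Ioo 0 1)).map fun u => (quantile μ u, quantile ν u)

lemma aemeasurable_quantile_prodMk (μ ν : Measure ℝ) :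
    AEMeasurable (fun u => (quantile μ u, quantile ν u)) (volume.restrict (Ioo 0 1)) :=
  aemeasurable_quantile.prodMk aemeasurable_quantile

section QuantileCoupling

variable (μ ν : Measure ℝ)

lemma map_fst_quantileCoupling [IsProbabilityMeasure μ] :
    (quantileCoupling μ ν).map Prod.fst = μ := by
  rw [quantileCoupling, AEMeasurable.map_map_of_aemeasurable measurable_fst.aemeasurable
    (aemeasurable_quantile_prodMk μ ν)]
  exact map_quantile μ

lemma map_snd_quantileCoupling [IsProbabilityMeasure ν] :
    (quantileCoupling μ ν).map Prod.snd = ν := by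
  rw [quantileCoupling, AEMeasurable.map_map_of_aemeasurable measurable_snd.aemeasurable
    (aemeasurable_quantile_prodMk μ ν)]
  exact map_quantile ν

lemma quantileCoupling_Iic_prod_Iic [IsProbabilityMeasure μ] [IsProbabilityMeasure ν]
    (s t : ℝ) :
    quantileCoupling μ ν (Iic s ×ˢ Iic t) = min (μ (Iic s)) (ν (Iic t)) := by
  rw [quantileCoupling, Measure.map_apply_of_aemeasurable (aemeasurable_quantile_prodMk μ ν)
      (measurableSet_Iic.prod measurableSet_Iic), mk_preimage_prod,
    measure_congr ((preimage_quantile_Iic_ae_eq s).inter (preimage_quantile_Iic_ae_eq t)),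
    Iic_inter_Iic, volume_restrict_Ioo_zero_one_Iic (min_le_of_left_le (cdf_le_one μ s)),
    ENNReal.ofReal_min, ofReal_cdf, ofReal_cdf]

instance [IsProbabilityMeasure μ] : IsProbabilityMeasure (quantileCoupling μ ν) :=
  have : IsProbabilityMeasure ((quantileCoupling μ ν).map Prod.fst) :=
    (map_fst_quantileCoupling μ ν).symm ▸ inferInstance
  Measure.isProbabilityMeasure_of_map Prod.fst

end QuantileCoupling

noncomputable def layer (s x : ℝ) : ℝ := (if 0 ≤ s then 1 else 0) - if x ≤ s then 1 else 0

lemma layer_eq_indicator (s x : ℝ) :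
    layer s x = (Ico 0 x).indicator 1 s - (Ico x 0).indicator 1 s := by
  simp only [layer, indicator_apply, mem_Ico, Pi.one_apply]
  split_ifs <;> grind

lemma abs_layer_eq_indicator (s x : ℝ) :
    |layer s x| = (Ico 0 x).indicator 1 s + (Ico x 0).indicator 1 s := by
  simp only [layer, indicator_apply, mem_Ico, Pi.one_apply]
  split_ifs <;> grind

lemma integrable_indicator_Ico_one (a b : ℝ) : Integrable ((Ico a b).indicator (1 : ℝ → ℝ)) :=
  (integrable_indicator_iff measurableSet_Ico).2 (integrableOn_const measure_Ico_lt_top.ne)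

lemma integrable_layer (x : ℝ) : Integrable (fun s => layer s x) := by
  simp only [layer_eq_indicator]
  exact (integrable_indicator_Ico_one 0 x).sub (integrable_indicator_Ico_one x 0)

lemma integral_layer (x : ℝ) : ∫ s, layer s x = x := by
  simp only [layer_eq_indicator]
  rw [integral_sub (integrable_indicator_Ico_one 0 x) (integrable_indicator_Ico_one x 0),
    integral_indicator_one measurableSet_Ico, integral_indicator_one measurableSet_Ico,
    Real.volume_real_Ico, Real.volume_real_Ico, sub_zero, zero_sub,
    max_zero_sub_max_neg_zero_eq_self]

lemma integral_abs_layer (x : ℝ) : ∫ s, |layer s x| = |x| := by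
  simp only [abs_layer_eq_indicator]
  rw [integral_add (integrable_indicator_Ico_one 0 x) (integrable_indicator_Ico_one x 0),
    integral_indicator_one measurableSet_Ico, integral_indicator_one measurableSet_Ico,
    Real.volume_real_Ico, Real.volume_real_Ico, sub_zero, zero_sub,
    max_zero_add_max_neg_zero_eq_abs_self]

lemma measurable_layer : Measurable (Function.uncurry layer) := by
  unfold Function.uncurry layer
  exact (Measurable.ite (measurableSet_le measurable_const measurable_fst) measurable_const
    measurable_const).sub
    (Measurable.ite (measurableSet_le measurable_snd measurable_fst) measurable_const
      measurable_const)

lemma integral_layer_mul_layer (x y : ℝ) :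
    ∫ q : ℝ × ℝ, layer q.1 x * layer q.2 y = x * y := by
  rw [Measure.volume_eq_prod, integral_prod_mul (fun s => layer s x) (fun t => layer t y),
    integral_layer, integral_layer]

section Hoeffding

variable {m : Measure (ℝ × ℝ)}

lemma integrable_layer_mul_layer_prod [SFinite m]
    (hm : Integrable (fun p : ℝ × ℝ => p.1 * p.2) m) :
    Integrable (fun z : (ℝ × ℝ) × (ℝ × ℝ) => layer z.2.1 z.1.1 * layer z.2.2 z.1.2)
      (m.prod volume) := by
  have hmeas : Measurable (fun z : (ℝ × ℝ) × (ℝ × ℝ) => layer z.2.1 z.1.1 * layer z.2.2 z.1.2) :=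
    (measurable_layer.comp (measurable_snd.fst.prodMk measurable_fst.fst)).mul
      (measurable_layer.comp (measurable_snd.snd.prodMk measurable_fst.snd))
  refine (integrable_prod_iff hmeas.aestronglyMeasurable).2 ⟨.of_forall fun p => ?_, ?_⟩
  · rw [Measure.volume_eq_prod]
    exact (integrable_layer p.1).mul_prod (integrable_layer p.2)
  · convert hm.norm using 2 with p
    simp only [norm_mul, Real.norm_eq_abs]
    rw [Measure.volume_eq_prod,
      integral_prod_mul (fun s => |layer s p.1|) (fun t => |layer t p.2|), integral_abs_layer,
      integral_abs_layer]

lemma integral_mul_eq_integral_integral_layer [SFinite m]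
    (hm : Integrable (fun p : ℝ × ℝ => p.1 * p.2) m) :
    ∫ p, p.1 * p.2 ∂m = ∫ q : ℝ × ℝ, ∫ p, layer q.1 p.1 * layer q.2 p.2 ∂m := by
  calc ∫ p, p.1 * p.2 ∂m = ∫ p : ℝ × ℝ, (∫ q : ℝ × ℝ, layer q.1 p.1 * layer q.2 p.2) ∂m := by
        simp only [integral_layer_mul_layer]
    _ = _ := integral_integral_swap (integrable_layer_mul_layer_prod hm)

lemma integral_layer_mul_layer_sub {m' : Measure (ℝ × ℝ)}
    [IsFiniteMeasure m] [IsFiniteMeasure m']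
    (hfst : m.map Prod.fst = m'.map Prod.fst) (hsnd : m.map Prod.snd = m'.map Prod.snd)
    (s t : ℝ) :
    ∫ p, layer s p.1 * layer t p.2 ∂m - ∫ p, layer s p.1 * layer t p.2 ∂m' =
      m.real (Iic s ×ˢ Iic t) - m'.real (Iic s ×ˢ Iic t) := by
  set a : ℝ := if 0 ≤ s then 1 else 0
  set b : ℝ := if 0 ≤ t then 1 else 0
  have hexpand : (fun p : ℝ × ℝ => layer s p.1 * layer t p.2) = fun p =>
      (Iic s ×ˢ Iic t).indicator 1 p - b * (Prod.fst ⁻¹' Iic s).indicator 1 p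
        - a * (Prod.snd ⁻¹' Iic t).indicator 1 p + a * b := by
    ext p
    simp only [layer, indicator, mem_prod, mem_preimage, mem_Iic, Pi.one_apply, a, b]
    split_ifs <;> simp_all
  have hformula (n : Measure (ℝ × ℝ)) [IsFiniteMeasure n] :
      ∫ p, layer s p.1 * layer t p.2 ∂n = n.real (Iic s ×ˢ Iic t)
        - b * (n.map Prod.fst).real (Iic s) - a * (n.map Prod.snd).real (Iic t)
        + a * b * (n.map Prod.fst).real univ := by
    have hQ : Integrable ((Iic s ×ˢ Iic t).indicator (1 : ℝ × ℝ → ℝ)) n :=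
      (integrable_const (1 : ℝ)).indicator (measurableSet_Iic.prod measurableSet_Iic)
    have hS : Integrable ((Prod.fst ⁻¹' Iic s).indicator (1 : ℝ × ℝ → ℝ)) n :=
      (integrable_const (1 : ℝ)).indicator (measurable_fst measurableSet_Iic)
    have hT : Integrable ((Prod.snd ⁻¹' Iic t).indicator (1 : ℝ × ℝ → ℝ)) n :=
      (integrable_const (1 : ℝ)).indicator (measurable_snd measurableSet_Iic)
    rw [hexpand, integral_add, integral_sub, integral_sub, integral_const_mul, integral_const_mul,
      integral_indicator_one (measurableSet_Iic.prod measurableSet_Iic),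
      integral_indicator_one (measurable_fst measurableSet_Iic),
      integral_indicator_one (measurable_snd measurableSet_Iic), integral_const,
      map_measureReal_apply measurable_fst measurableSet_Iic,
      map_measureReal_apply measurable_snd measurableSet_Iic,
      map_measureReal_apply measurable_fst MeasurableSet.univ, smul_eq_mul, preimage_univ]
    · ring
    exacts [hQ, hS.const_mul b, hQ.sub (hS.const_mul b), hT.const_mul a,
      (hQ.sub (hS.const_mul b)).sub (hT.const_mul a), integrable_const _]
  rw [hformula, hformula, hfst, hsnd]
  ring

end Hoeffding

theorem integral_mul_le_of_measure_Iic_prod_Iic_le {m m' : Measure (ℝ × ℝ)}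
    [IsFiniteMeasure m] [IsFiniteMeasure m']
    (hfst : m.map Prod.fst = m'.map Prod.fst) (hsnd : m.map Prod.snd = m'.map Prod.snd)
    (hm : Integrable (fun p : ℝ × ℝ => p.1 * p.2) m)
    (hm' : Integrable (fun p : ℝ × ℝ => p.1 * p.2) m')
    (hle : ∀ s t, m (Iic s ×ˢ Iic t) ≤ m' (Iic s ×ˢ Iic t)) :
    ∫ p, p.1 * p.2 ∂m ≤ ∫ p, p.1 * p.2 ∂m' := by
  rw [integral_mul_eq_integral_integral_layer hm, integral_mul_eq_integral_integral_layer hm']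
  refine integral_mono (integrable_layer_mul_layer_prod hm).integral_prod_right
    (integrable_layer_mul_layer_prod hm').integral_prod_right fun q => ?_
  have hreal : m.real (Iic q.1 ×ˢ Iic q.2) ≤ m'.real (Iic q.1 ×ˢ Iic q.2) :=
    ENNReal.toReal_mono (measure_ne_top m' _) (hle q.1 q.2)
  linarith [integral_layer_mul_layer_sub hfst hsnd q.1 q.2]

lemma measure_prod_le_min_map {α β : Type*} [MeasurableSpace α] [MeasurableSpace β]
    (m : Measure (α × β)) {s : Set α} {t : Set β} (hs : MeasurableSet s) (ht : MeasurableSet t) :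
    m (s ×ˢ t) ≤ min (m.map Prod.fst s) (m.map Prod.snd t) := by
  rw [Measure.map_apply measurable_fst hs, Measure.map_apply measurable_snd ht]
  exact le_min (measure_mono (prod_subset_preimage_fst s t))
    (measure_mono (prod_subset_preimage_snd s t))

section Coupling

variable {μ ν : Measure ℝ} {m : Measure (ℝ × ℝ)}

lemma memLp_fst_of_map_fst (h : m.map Prod.fst = μ) (hμ : MemLp id 2 μ) : MemLp Prod.fst 2 m :=
  (h ▸ hμ).comp_of_map measurable_fst.aemeasurable

lemma memLp_snd_of_map_snd (h : m.map Prod.snd = ν) (hν : MemLp id 2 ν) : MemLp Prod.snd 2 m :=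
  (h ▸ hν).comp_of_map measurable_snd.aemeasurable

lemma integral_sub_sq_of_map (h₁ : m.map Prod.fst = μ) (h₂ : m.map Prod.snd = ν)
    (hμ : MemLp id 2 μ) (hν : MemLp id 2 ν) :
    ∫ p, (p.1 - p.2) ^ 2 ∂m = ∫ x, x ^ 2 ∂μ + ∫ y, y ^ 2 ∂ν - 2 * ∫ p, p.1 * p.2 ∂m := by
  have hfst := memLp_fst_of_map_fst h₁ hμ
  have hsnd := memLp_snd_of_map_snd h₂ hν
  have hmul : Integrable (fun p : ℝ × ℝ => p.1 * p.2) m := hfst.integrable_mul hsnd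
  simp_rw [sub_sq', mul_assoc]
  rw [integral_sub, integral_add, integral_const_mul, ← h₁, ← h₂,
    integral_map measurable_fst.aemeasurable (by fun_prop),
    integral_map measurable_snd.aemeasurable (by fun_prop)]
  exacts [hfst.integrable_sq, hsnd.integrable_sq, hfst.integrable_sq.add hsnd.integrable_sq,
    hmul.const_mul 2]

theorem integral_quantileCoupling_sub_sq_le [IsProbabilityMeasure μ] [IsProbabilityMeasure ν]
    (h₁ : m.map Prod.fst = μ) (h₂ : m.map Prod.snd = ν) (hμ : MemLp id 2 μ) (hν : MemLp id 2 ν) :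
    ∫ p, (p.1 - p.2) ^ 2 ∂(quantileCoupling μ ν) ≤ ∫ p, (p.1 - p.2) ^ 2 ∂m := by
  have : IsProbabilityMeasure (m.map Prod.fst) := h₁ ▸ inferInstance
  have : IsProbabilityMeasure m := Measure.isProbabilityMeasure_of_map Prod.fst
  have hq₁ := map_fst_quantileCoupling μ ν
  have hq₂ := map_snd_quantileCoupling μ ν
  have hmul := integral_mul_le_of_measure_Iic_prod_Iic_le (h₁.trans hq₁.symm) (h₂.trans hq₂.symm)
    ((memLp_fst_of_map_fst h₁ hμ).integrable_mul (memLp_snd_of_map_snd h₂ hν))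
    ((memLp_fst_of_map_fst hq₁ hμ).integrable_mul (memLp_snd_of_map_snd hq₂ hν))
    fun s t => (measure_prod_le_min_map m measurableSet_Iic measurableSet_Iic).trans_eq
      (by rw [h₁, h₂, quantileCoupling_Iic_prod_Iic])
  rw [integral_sub_sq_of_map h₁ h₂ hμ hν, integral_sub_sq_of_map hq₁ hq₂ hμ hν]
  linarith

end Coupling

/-- The coupling by quantile functions of a uniform random variable is optimal:
its quadratic cost equals the squared Wasserstein distance. -/
theorem optimal_coupling_quantile (μ ν : Measure ℝ)
    [IsProbabilityMeasure μ] [IsProbabilityMeasure ν]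
    (hμ : FiniteSecondMoment μ) (hν : FiniteSecondMoment ν) :
    ∫ t in Set.Ioo (0:ℝ) 1, (quantile μ t - quantile ν t) ^ 2 = Wsq μ ν := by
  have hμ₂ : MemLp id 2 μ := (memLp_two_iff_integrable_sq aestronglyMeasurable_id).2 hμ
  have hν₂ : MemLp id 2 ν := (memLp_two_iff_integrable_sq aestronglyMeasurable_id).2 hν
  have hcost : ∫ t in Ioo 0 1, (quantile μ t - quantile ν t) ^ 2 =
      ∫ p, (p.1 - p.2) ^ 2 ∂(quantileCoupling μ ν) :=
    (integral_map (aemeasurable_quantile_prodMk μ ν)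
      (by fun_prop : Measurable fun p : ℝ × ℝ => (p.1 - p.2) ^ 2).aestronglyMeasurable).symm
  rw [hcost, Wsq, eq_comm]
  refine IsLeast.csInf_eq
    ⟨⟨_, map_fst_quantileCoupling μ ν, map_snd_quantileCoupling μ ν, rfl⟩, ?_⟩
  rintro _ ⟨m, h₁, h₂, rfl⟩
  exact integral_quantileCoupling_sub_sq_le h₁ h₂ hμ₂ hν₂
end

section
/- If K : E×E → ℝ is a negative definite kernel, then K^H (pointwise H-th power, assuming K ≥ 0) is a negative definite kernel for every 0 ≤ H ≤ 1. -/
open MeasureTheory ProbabilityTheory Real BigOperators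

/-!
Schoenberg's argument. If `A` is symmetric and conditionally negative definite, then for any index
`i₀` the matrix `A i i₀ + A i₀ j - A i j - A i₀ i₀` is positive semidefinite (test `A` against
`d - (∑ d) • δ_{i₀}`, which has zero sum). By Schur's product theorem and the exponential series its
entrywise exponential is positive semidefinite, and so is `exp (-A)`, which differs from it by a
diagonal congruence and a positive factor. Applied to `u • A`, the matrices `exp (-u A)` are
positive semidefinite for all `u ≥ 0`.

For `0 < H < 1` and `t ≥ 0`, the substitution `u ↦ u t` gives
`t ^ H * ∫ (1 - exp (-u)) u ^ (-1 - H) du = ∫ (1 - exp (-u t)) u ^ (-1 - H) du` over `(0, ∞)`,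
with a positive constant on the left. If `∑ cᵢ = 0`, the quadratic form of `1 - exp (-u A)` is
minus that of `exp (-u A)`, so integrating against `u ^ (-1 - H)` shows that the quadratic form of
`A ^ H` is nonpositive.
-/

open Matrix Set
open scoped ComplexOrder

namespace Matrix

variable {ι : Type*} [Fintype ι]

structure IsCondNegDef (A : Matrix ι ι ℝ) : Prop where
  isHermitian : A.IsHermitian
  dotProduct_mulVec_nonpos : ∀ c : ι → ℝ, ∑ i, c i = 0 → c ⬝ᵥ (A *ᵥ c) ≤ 0

lemma dotProduct_mulVec_eq_sum_sum {R : Type*} [CommSemiring R] (A : Matrix ι ι R) (c : ι → R) :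
    c ⬝ᵥ (A *ᵥ c) = ∑ i, ∑ j, c i * c j * A i j := by
  simp only [dotProduct, mulVec, Finset.mul_sum]
  exact Fintype.sum_congr _ _ fun i => Fintype.sum_congr _ _ fun j => by ring

lemma PosSemidef.map_pow {𝕜 : Type*} [RCLike 𝕜] {A : Matrix ι ι 𝕜} (hA : A.PosSemidef) :
    ∀ k : ℕ, (A.map (· ^ k)).PosSemidef
  | 0 => by
    convert posSemidef_vecMulVec_self_star (1 : ι → 𝕜) using 1
    ext i j
    simp [vecMulVec]
  | k + 1 => by
    convert (hA.map_pow k).hadamard hA using 1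
    ext i j
    simp [pow_succ]

lemma PosSemidef.map_exp {A : Matrix ι ι ℝ} (hA : A.PosSemidef) : (A.map exp).PosSemidef := by
  refine .of_dotProduct_mulVec_nonneg (hA.isHermitian.map _ fun _ => rfl) fun c => ?_
  rw [star_trivial]
  have hsum : HasSum (fun k : ℕ => c ⬝ᵥ (A.map (· ^ k) *ᵥ c) / k.factorial)
      (c ⬝ᵥ (A.map exp *ᵥ c)) := by
    simp only [dotProduct_mulVec_eq_sum_sum, Finset.sum_div, map_apply, mul_div_assoc]
    refine hasSum_sum fun i _ => hasSum_sum fun j _ => ?_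
    simpa [exp_eq_exp_ℝ] using (NormedSpace.expSeries_div_hasSum_exp (A i j)).mul_left (c i * c j)
  refine hsum.nonneg fun k => div_nonneg ?_ (by positivity)
  simpa using (hA.map_pow k).dotProduct_mulVec_nonneg c

namespace IsCondNegDef

variable {A : Matrix ι ι ℝ}

lemma smul (hA : A.IsCondNegDef) {r : ℝ} (hr : 0 ≤ r) : (r • A).IsCondNegDef where
  isHermitian := by simpa using hA.isHermitian.smul (IsSelfAdjoint.all r)
  dotProduct_mulVec_nonpos c hc := by
    rw [smul_mulVec, dotProduct_smul, smul_eq_mul]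
    exact mul_nonpos_of_nonneg_of_nonpos hr (hA.dotProduct_mulVec_nonpos c hc)

lemma apply_comm (hA : A.IsCondNegDef) (i j : ι) : A j i = A i j := by
  simpa using hA.isHermitian.apply i j

lemma posSemidef_add_sub_sub (hA : A.IsCondNegDef) (i₀ : ι) :
    (of fun i j => A i i₀ + A i₀ j - A i j - A i₀ i₀).PosSemidef := by
  classical
  refine .of_dotProduct_mulVec_nonneg ?_ fun d => ?_
  · ext i j
    simp only [hA.apply_comm, conjTranspose_apply, of_apply, star_trivial]
    ring
  set e : ι → ℝ := d - (∑ i, d i) • Pi.single i₀ 1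
  have he : ∑ i, e i = 0 := by simp [e, Finset.sum_sub_distrib, Pi.single_apply]
  have hq : star d ⬝ᵥ ((of fun i j => A i i₀ + A i₀ j - A i j - A i₀ i₀) *ᵥ d) =
      -(e ⬝ᵥ (A *ᵥ e)) := by
    simp only [dotProduct_mulVec_eq_sum_sum, star_trivial, of_apply, mul_sub, mul_add, sub_mul,
      Finset.sum_sub_distrib, Finset.sum_add_distrib,
      e, Pi.sub_apply, Pi.smul_apply, Pi.single_apply, smul_eq_mul, mul_ite, ite_mul, mul_one,
      mul_zero, zero_mul, Finset.sum_ite_irrel, Finset.sum_const_zero, Finset.sum_ite_eq',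
      Finset.mem_univ, if_true]
    simp only [Finset.mul_sum, Finset.sum_mul]
    rw [Finset.sum_comm (f := fun x y => d y * d x * A i₀ x),
      Finset.sum_comm (f := fun x y => d y * d x * A i₀ i₀)]
    ring
  rw [hq]
  exact neg_nonneg.2 (hA.dotProduct_mulVec_nonpos e he)

lemma posSemidef_map_exp_neg (hA : A.IsCondNegDef) : (A.map fun t => exp (-t)).PosSemidef := by
  classical
  rcases isEmpty_or_nonempty ι with _ | ⟨⟨i₀⟩⟩
  · rw [Subsingleton.elim (A.map _) 0]
    exact .zero
  set D : Matrix ι ι ℝ := diagonal fun i => exp (-A i i₀)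
  have h := ((hA.posSemidef_add_sub_sub i₀).map_exp.conjTranspose_mul_mul_same D).smul
    (exp_pos (A i₀ i₀)).le
  convert h using 1
  ext i j
  simp only [D, map_apply, conjTranspose_eq_transpose_of_trivial, diagonal_transpose, smul_apply,
    mul_diagonal, diagonal_mul, of_apply, smul_eq_mul, hA.apply_comm i₀ j, ← exp_add]
  ring_nf

end IsCondNegDef

end Matrix

section

variable {H : ℝ}

lemma integrableOn_one_sub_exp_neg_mul_rpow (h0 : 0 < H) (h1 : H < 1) :
    IntegrableOn (fun u : ℝ => (1 - exp (-u)) * u ^ (-1 - H)) (Ioi 0) := by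
  have hcont : ContinuousOn (fun u : ℝ => (1 - exp (-u)) * u ^ (-1 - H)) (Ioi 0) :=
    (by fun_prop : Continuous fun u : ℝ => 1 - exp (-u)).continuousOn.mul
      (continuousOn_id.rpow_const fun u hu => Or.inl (ne_of_gt hu))
  have hexp : ∀ u : ℝ, 0 < u → 0 ≤ 1 - exp (-u) ∧ 1 - exp (-u) ≤ u ∧ 1 - exp (-u) ≤ 1 :=
    fun u hu => ⟨by simp [hu.le], by linarith [add_one_le_exp (-u)], by linarith [exp_pos (-u)]⟩
  rw [← Ioc_union_Ioi_eq_Ioi zero_le_one]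
  refine IntegrableOn.union ?_ ?_
  · refine Integrable.mono' (g := fun u => u ^ (-H)) ?_
      ((hcont.mono Ioc_subset_Ioi_self).aestronglyMeasurable measurableSet_Ioc)
      (ae_restrict_of_forall_mem measurableSet_Ioc fun u hu => ?_)
    · exact (intervalIntegrable_iff_integrableOn_Ioc_of_le zero_le_one).1
        (intervalIntegral.intervalIntegrable_rpow' (by linarith))
    · obtain ⟨hpos, hle, -⟩ := hexp u hu.1
      rw [norm_of_nonneg (mul_nonneg hpos (rpow_nonneg hu.1.le _)), show -H = -1 - H + 1 by ring,
        rpow_add_one hu.1.ne', mul_comm (u ^ _)]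
      exact mul_le_mul_of_nonneg_right hle (rpow_nonneg hu.1.le _)
  · refine Integrable.mono' (g := fun u => u ^ (-1 - H)) ?_
      ((hcont.mono (Ioi_subset_Ioi zero_le_one)).aestronglyMeasurable measurableSet_Ioi)
      (ae_restrict_of_forall_mem measurableSet_Ioi fun u (hu : 1 < u) => ?_)
    · exact integrableOn_Ioi_rpow_of_lt (by linarith) one_pos
    · obtain ⟨hpos, -, hle⟩ := hexp u (one_pos.trans hu)
      have hrpow := rpow_nonneg (one_pos.trans hu).le (-1 - H)
      rw [norm_of_nonneg (mul_nonneg hpos hrpow)]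
      exact mul_le_of_le_one_left hrpow hle

lemma integral_one_sub_exp_neg_mul_rpow_pos (h0 : 0 < H) (h1 : H < 1) :
    0 < ∫ u in Ioi 0, (1 - exp (-u)) * u ^ (-1 - H) := by
  have hpos : ∀ u ∈ Ioi (0 : ℝ), 0 < (1 - exp (-u)) * u ^ (-1 - H) := fun u (hu : 0 < u) =>
    mul_pos (by simpa using hu) (rpow_pos_of_pos hu _)
  rw [setIntegral_pos_iff_support_of_nonneg_ae
    (ae_restrict_of_forall_mem measurableSet_Ioi fun u hu => (hpos u hu).le)
    (integrableOn_one_sub_exp_neg_mul_rpow h0 h1),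
    inter_eq_self_of_subset_right (show Ioi (0 : ℝ) ⊆ Function.support _ from
      fun u hu => (hpos u hu).ne')]
  simp

lemma one_sub_exp_neg_mul_mul_rpow_eq {u t : ℝ} (hu : 0 < u) (ht : 0 < t) :
    (1 - exp (-(u * t))) * u ^ (-1 - H) =
      t ^ (1 + H) * ((1 - exp (-(u * t))) * (u * t) ^ (-1 - H)) := by
  have : t ^ (1 + H) * t ^ (-1 - H) = 1 := by simp [← rpow_add ht]
  rw [mul_rpow hu.le ht.le]
  linear_combination -((1 - exp (-(u * t))) * u ^ (-1 - H)) * this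

lemma integrableOn_one_sub_exp_neg_mul_mul_rpow (h0 : 0 < H) (h1 : H < 1) {t : ℝ} (ht : 0 ≤ t) :
    IntegrableOn (fun u : ℝ => (1 - exp (-(u * t))) * u ^ (-1 - H)) (Ioi 0) := by
  rcases ht.eq_or_lt with rfl | ht
  · simp
  have hscaled : IntegrableOn (fun u : ℝ => (1 - exp (-(u * t))) * (u * t) ^ (-1 - H)) (Ioi 0) :=
    (integrableOn_Ioi_comp_mul_right_iff (fun u : ℝ => (1 - exp (-u)) * u ^ (-1 - H)) 0 ht).2
      (by simpa using integrableOn_one_sub_exp_neg_mul_rpow h0 h1)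
  exact IntegrableOn.congr_fun (hscaled.const_mul (t ^ (1 + H)))
    (fun u hu => (one_sub_exp_neg_mul_mul_rpow_eq hu ht).symm) measurableSet_Ioi

lemma integral_one_sub_exp_neg_mul_mul_rpow (hH : H ≠ 0) {t : ℝ} (ht : 0 ≤ t) :
    ∫ u in Ioi 0, (1 - exp (-(u * t))) * u ^ (-1 - H) =
      t ^ H * ∫ u in Ioi 0, (1 - exp (-u)) * u ^ (-1 - H) := by
  rcases ht.eq_or_lt with rfl | ht
  · simp [zero_rpow hH]
  rw [setIntegral_congr_fun measurableSet_Ioi fun u hu => one_sub_exp_neg_mul_mul_rpow_eq hu ht,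
    integral_const_mul, integral_comp_mul_right_Ioi (fun u => (1 - exp (-u)) * u ^ (-1 - H)) 0 ht,
    zero_mul, smul_eq_mul, ← mul_assoc, ← rpow_neg_one, ← rpow_add ht]
  ring_nf

end

namespace Matrix.IsCondNegDef

variable {ι : Type*} [Fintype ι] {A : Matrix ι ι ℝ} {H : ℝ}

lemma dotProduct_map_rpow_mulVec_nonpos (hA : A.IsCondNegDef) (hA0 : ∀ i j, 0 ≤ A i j)
    (h0 : 0 < H) (h1 : H < 1) {c : ι → ℝ} (hc : ∑ i, c i = 0) :
    c ⬝ᵥ (A.map (· ^ H) *ᵥ c) ≤ 0 := by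
  have hint : ∀ i j, IntegrableOn
      (fun u => c i * c j * ((1 - exp (-(u * A i j))) * u ^ (-1 - H))) (Ioi 0) :=
    fun i j => (integrableOn_one_sub_exp_neg_mul_mul_rpow h0 h1 (hA0 i j)).const_mul _
  have hcc : ∑ i, ∑ j, c i * c j = 0 := by rw [← Finset.sum_mul_sum, hc, zero_mul]
  have hintegrand : ∀ u, ∑ i, ∑ j, c i * c j * ((1 - exp (-(u * A i j))) * u ^ (-1 - H)) =
      -(c ⬝ᵥ ((u • A).map (fun t => exp (-t)) *ᵥ c) * u ^ (-1 - H)) := by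
    intro u
    have hsplit : ∀ i j, c i * c j * ((1 - exp (-(u * A i j))) * u ^ (-1 - H)) =
        c i * c j * u ^ (-1 - H) - c i * c j * exp (-(u * A i j)) * u ^ (-1 - H) :=
      fun i j => by ring
    simp only [hsplit, Finset.sum_sub_distrib, ← Finset.sum_mul, hcc, dotProduct_mulVec_eq_sum_sum,
      map_apply, smul_apply, smul_eq_mul]
    ring
  refine nonpos_of_mul_nonpos_left ?_ (integral_one_sub_exp_neg_mul_rpow_pos h0 h1)
  calc c ⬝ᵥ (A.map (· ^ H) *ᵥ c) * ∫ u in Ioi 0, (1 - exp (-u)) * u ^ (-1 - H)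
      = ∫ u in Ioi 0, ∑ i, ∑ j, c i * c j * ((1 - exp (-(u * A i j))) * u ^ (-1 - H)) := by
        rw [integral_finsetSum _ fun i _ => integrable_finsetSum _ fun j _ => hint i j,
          dotProduct_mulVec_eq_sum_sum, Finset.sum_mul]
        refine Fintype.sum_congr _ _ fun i => ?_
        rw [integral_finsetSum _ fun j _ => hint i j, Finset.sum_mul]
        refine Fintype.sum_congr _ _ fun j => ?_
        rw [integral_const_mul, integral_one_sub_exp_neg_mul_mul_rpow h0.ne' (hA0 i j), map_apply,
          mul_assoc]
    _ ≤ 0 := setIntegral_nonpos measurableSet_Ioi fun u (hu : 0 < u) => by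
        rw [hintegrand]
        exact neg_nonpos.2 (mul_nonneg
          (by simpa using (hA.smul hu.le).posSemidef_map_exp_neg.dotProduct_mulVec_nonneg c)
          (rpow_nonneg hu.le _))

theorem map_rpow (hA : A.IsCondNegDef) (hA0 : ∀ i j, 0 ≤ A i j) (h0 : 0 ≤ H) (h1 : H ≤ 1) :
    (A.map (· ^ H)).IsCondNegDef where
  isHermitian := hA.isHermitian.map _ fun _ => rfl
  dotProduct_mulVec_nonpos c hc := by
    rcases h0.eq_or_lt with rfl | h0
    · simp [dotProduct_mulVec_eq_sum_sum, ← Finset.sum_mul_sum, hc]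
    rcases h1.eq_or_lt with rfl | h1
    · simpa using hA.dotProduct_mulVec_nonpos c hc
    exact hA.dotProduct_map_rpow_mulVec_nonpos hA0 h0 h1 hc

end Matrix.IsCondNegDef

theorem negDef_rpow_general {E : Type*} (K : E → E → ℝ)
    (hnonneg : ∀ x y, 0 ≤ K x y)
    (hsym : ∀ x y, K x y = K y x)
    (hneg : ∀ (n : ℕ) (x : Fin n → E) (c : Fin n → ℝ), ∑ i, c i = 0 →
      ∑ i, ∑ j, c i * c j * K (x i) (x j) ≤ 0)
    (H : ℝ) (h0 : 0 ≤ H) (h1 : H ≤ 1) :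
    ∀ (n : ℕ) (x : Fin n → E) (c : Fin n → ℝ), ∑ i, c i = 0 →
      ∑ i, ∑ j, c i * c j * (K (x i) (x j)) ^ H ≤ 0 := by
  intro n x c hc
  have hA : (of fun i j => K (x i) (x j)).IsCondNegDef :=
    { isHermitian := by ext i j; simp [hsym]
      dotProduct_mulVec_nonpos := fun c hc => by
        simpa [dotProduct_mulVec_eq_sum_sum] using hneg n x c hc }
  simpa [dotProduct_mulVec_eq_sum_sum] using
    (hA.map_rpow (fun i j => hnonneg _ _) h0 h1).dotProduct_mulVec_nonpos c hc

/-- If K is a nonnegative negative definite kernel then K^H is negative definite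
for every 0 ≤ H ≤ 1. -/
theorem negDef_rpow {E : Type*} (K : E → E → ℝ)
    (hnonneg : ∀ x y, 0 ≤ K x y)
    (hdiag : ∀ x, K x x = 0)
    (hsym : ∀ x y, K x y = K y x)
    (hneg : ∀ (n : ℕ) (x : Fin n → E) (c : Fin n → ℝ), ∑ i, c i = 0 →
      ∑ i, ∑ j, c i * c j * K (x i) (x j) ≤ 0)
    (H : ℝ) (h0 : 0 ≤ H) (h1 : H ≤ 1) :
    ∀ (n : ℕ) (x : Fin n → E) (c : Fin n → ℝ), ∑ i, c i = 0 →
      ∑ i, ∑ j, c i * c j * (K (x i) (x j)) ^ H ≤ 0 :=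
  negDef_rpow_general K hnonneg hsym hneg H h0 h1
end

section
/- (Schoenberg) Let X be a set, K, R : X×X → ℝ, and o ∈ X such that K(x,x)=0 for all x and R(x,y) = K(x,o) + K(y,o) − K(x,y) for all x,y. Then R is a positive definite kernel if and only if K is a negative definite kernel. -/
open MeasureTheory ProbabilityTheory Real BigOperators

/-- Schoenberg: R(x,y) = K(x,o)+K(y,o)-K(x,y) is positive definite iff K is
negative definite. -/
theorem schoenberg_posDef_iff_negDef {X : Type*} (K R : X → X → ℝ) (o : X)
    (hdiag : ∀ x, K x x = 0) (hsym : ∀ x y, K x y = K y x)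
    (hR : ∀ x y, R x y = K x o + K y o - K x y) :
    (∀ (n : ℕ) (x : Fin n → X) (lam : Fin n → ℝ),
      0 ≤ ∑ i, ∑ j, lam i * lam j * R (x i) (x j)) ↔
    (∀ (n : ℕ) (x : Fin n → X) (c : Fin n → ℝ), ∑ i, c i = 0 →
      ∑ i, ∑ j, c i * c j * K (x i) (x j) ≤ 0) := by
  have expand : ∀ (n : ℕ) (x : Fin n → X) (lam : Fin n → ℝ),
      ∑ i, ∑ j, lam i * lam j * R (x i) (x j) =
        2 * (∑ i, lam i) * (∑ i, lam i * K (x i) o)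
          - ∑ i, ∑ j, lam i * lam j * K (x i) (x j) := by
    intro n x lam
    have h1 : ∀ i j : Fin n, lam i * lam j * R (x i) (x j) =
        (lam i * K (x i) o) * lam j + lam i * (lam j * K (x j) o)
          - lam i * lam j * K (x i) (x j) := by
      intro i j; rw [hR]; ring
    calc ∑ i, ∑ j, lam i * lam j * R (x i) (x j)
        = ∑ i, ∑ j, ((lam i * K (x i) o) * lam j + lam i * (lam j * K (x j) o)
          - lam i * lam j * K (x i) (x j)) := by
          exact Finset.sum_congr rfl fun i _ => Finset.sum_congr rfl fun j _ => h1 i j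
      _ = (∑ i, lam i * K (x i) o) * (∑ j, lam j)
            + (∑ i, lam i) * (∑ j, lam j * K (x j) o)
            - ∑ i, ∑ j, lam i * lam j * K (x i) (x j) := by
          simp only [Finset.sum_sub_distrib, Finset.sum_add_distrib,
            ← Finset.sum_mul, ← Finset.mul_sum]
      _ = _ := by ring
  constructor
  · intro hPD n x c hc
    have h := hPD n x c
    rw [expand n x c, hc] at h
    linarith
  · intro hND n x lam
    set S := ∑ i, lam i with hS
    set c : Fin (n + 1) → ℝ := Fin.cons (-S) lam with hcdef
    set y : Fin (n + 1) → X := Fin.cons o x with hydef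
    have hcsum : ∑ i, c i = 0 := by
      rw [hcdef, Fin.sum_cons]; simp [hS]
    have h := hND (n + 1) y c hcsum
    have hexp : ∑ i, ∑ j, c i * c j * K (y i) (y j)
        = ∑ i, ∑ j, lam i * lam j * K (x i) (x j)
          - 2 * S * (∑ i, lam i * K (x i) o) := by
      rw [hcdef, hydef]
      rw [Fin.sum_univ_succ]
      have hrow : ∀ i : Fin (n + 1),
          ∑ j, (Fin.cons (-S) lam : Fin (n+1) → ℝ) i
            * (Fin.cons (-S) lam : Fin (n+1) → ℝ) j
            * K ((Fin.cons o x : Fin (n+1) → X) i) ((Fin.cons o x : Fin (n+1) → X) j)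
          = (Fin.cons (-S) lam : Fin (n+1) → ℝ) i * (-S)
              * K ((Fin.cons o x : Fin (n+1) → X) i) o
            + ∑ j : Fin n, (Fin.cons (-S) lam : Fin (n+1) → ℝ) i * lam j
              * K ((Fin.cons o x : Fin (n+1) → X) i) (x j) := by
        intro i
        rw [Fin.sum_univ_succ]
        simp
      rw [hrow 0]
      have h2 : ∑ i : Fin n, ∑ j, (Fin.cons (-S) lam : Fin (n+1) → ℝ) i.succ
            * (Fin.cons (-S) lam : Fin (n+1) → ℝ) j
            * K ((Fin.cons o x : Fin (n+1) → X) i.succ) ((Fin.cons o x : Fin (n+1) → X) j)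
          = ∑ i : Fin n, (lam i * (-S) * K (x i) o
              + ∑ j : Fin n, lam i * lam j * K (x i) (x j)) := by
        refine Finset.sum_congr rfl fun i _ => ?_
        rw [hrow i.succ]; simp
      rw [h2]
      simp only [Fin.cons_zero, hdiag, mul_zero, zero_add]
      rw [Finset.sum_add_distrib]
      have h3 : ∀ j : Fin n, K o (x j) = K (x j) o := fun j => hsym o (x j)
      simp only [h3]
      have h4 : ∑ i : Fin n, -S * lam i * K (x i) o
          = -S * ∑ i : Fin n, lam i * K (x i) o := by
        rw [Finset.mul_sum]; exact Finset.sum_congr rfl fun i _ => by ring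
      have h5 : ∑ i : Fin n, lam i * -S * K (x i) o
          = -S * ∑ i : Fin n, lam i * K (x i) o := by
        rw [Finset.mul_sum]; exact Finset.sum_congr rfl fun i _ => by ring
      rw [h4, h5]; ring
    rw [hexp] at h
    rw [expand n x lam]
    linarith
end
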